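/- arXiv:2512.04341 — 3 statements merged into one kernel-verified Lean document; each statement's English description precedes it below -/
import Mathlib

section
/- General simulation lemma: for any (possibly history-dependent) policy π and any two MDP models m and m̂ with rewards bounded in [−r_max, r_max] and discount γ ∈ [0,1), the difference in discounted returns satisfies |J(π, m) − J(π, m̂)| ≤ (2 r_max / (1−γ)²) · E_{(s,a)∼d^π_{m̂}}[TV(m(s,a), m̂(s,a))], where d^π_{m̂} is the discounted state-action occupancy of π under m̂ and TV is the total variation distance between joint reward-next-state distributions. -/
/-- A history: a list of past (state, action, reward) triples (most recent first)
together with the current state. -/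
abbrev Hist (S A Rw : Type*) := List (S × A × Rw) × S

/-- Probability of a history under initial distribution `ρ`, history-dependent
policy `π`, and model `m` (a joint reward–next-state distribution). -/
noncomputable def histProb {S A Rw : Type*}
    (ρ : S → ℝ) (π : Hist S A Rw → A → ℝ) (m : S → A → Rw × S → ℝ) :
    List (S × A × Rw) → S → ℝ
  | [], s => ρ s
  | (s, a, r) :: rest, s' =>
      histProb ρ π m rest s * π (rest, s) a * m s a (r, s')

/-- Discounted return `J(π, m) = E[∑_t γ^t r_{t+1}]`. -/
noncomputable def Jval {S A Rw : Type*} [Fintype S] [Fintype A] [Fintype Rw]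
    (γ : ℝ) (rval : Rw → ℝ) (ρ : S → ℝ) (π : Hist S A Rw → A → ℝ)
    (m : S → A → Rw × S → ℝ) : ℝ :=
  ∑' h : Hist S A Rw, γ ^ h.1.length * histProb ρ π m h.1 h.2 *
    ∑ a, π h a * ∑ x : Rw × S, m h.2 a x * rval x.1

/-- Normalized discounted state-action occupancy
`d^π_m(s,a) = (1−γ)∑_t γ^t Pr(s_t=s, a_t=a)`. -/
noncomputable def occupancy {S A Rw : Type*} [DecidableEq S]
    (γ : ℝ) (ρ : S → ℝ) (π : Hist S A Rw → A → ℝ)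
    (m : S → A → Rw × S → ℝ) (s : S) (a : A) : ℝ :=
  (1 - γ) * ∑' h : Hist S A Rw,
    if h.2 = s then γ ^ h.1.length * histProb ρ π m h.1 h.2 * π h a else 0

/-!
Couple the two history distributions one step at a time: the total-variation distance between
the laws of length-`(n+1)` histories under `m` and under `mhat` exceeds the one between
length-`n` histories by at most `D n`, the `mhat`-expectation at step `n` of the TV distance
between `m (s, a)` and `mhat (s, a)`. Hence the two expected step-`n` rewards differ by at most
`2 r_max (D 0 + ⋯ + D n)`. Weighting by `γ ^ n` and summing, `D k` is counted with weight
`∑_{n ≥ k} γ ^ n ≤ γ ^ k / (1 - γ)`, so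
`|J(π, m) - J(π, mhat)| ≤ 2 r_max / (1 - γ) * ∑ k, γ ^ k D k`, and `∑ k, γ ^ k D k` is the
occupancy-weighted TV distance divided by `1 - γ`.
-/

theorem sum_pow_mul_sum_range_succ_le {γ : ℝ} (hγ0 : 0 ≤ γ) (hγ1 : γ < 1) {d : ℕ → ℝ}
    (hd : ∀ k, 0 ≤ d k) (N : ℕ) :
    ∑ n ∈ Finset.range N, γ ^ n * ∑ k ∈ Finset.range (n + 1), d k ≤
      (∑ k ∈ Finset.range N, γ ^ k * d k) / (1 - γ) :=
  calc ∑ n ∈ Finset.range N, γ ^ n * ∑ k ∈ Finset.range (n + 1), d k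
      = ∑ k ∈ Finset.range N, (∑ n ∈ Finset.Ico k N, γ ^ n) * d k := by
        simp only [Finset.mul_sum, Finset.sum_mul]
        refine Finset.sum_comm' fun n k => ?_
        simp only [Finset.mem_range, Finset.mem_Ico]
        omega
    _ ≤ ∑ k ∈ Finset.range N, γ ^ k / (1 - γ) * d k :=
        Finset.sum_le_sum fun k _ =>
          mul_le_mul_of_nonneg_right (geom_sum_Ico_le_of_lt_one hγ0 hγ1) (hd k)
    _ = (∑ k ∈ Finset.range N, γ ^ k * d k) / (1 - γ) := by
        rw [Finset.sum_div]
        exact Finset.sum_congr rfl fun k _ => by ring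

namespace MDP

section Distributions

variable {ι : Type*} [Fintype ι]

noncomputable def tvDist (p q : ι → ℝ) : ℝ := (1 / 2) * ∑ i, |p i - q i|

theorem tvDist_nonneg (p q : ι → ℝ) : 0 ≤ tvDist p q :=
  mul_nonneg (by norm_num) (Finset.sum_nonneg fun _ _ => abs_nonneg _)

theorem tvDist_le_one {p q : ι → ℝ} (hp0 : ∀ i, 0 ≤ p i) (hp1 : ∑ i, p i = 1)
    (hq0 : ∀ i, 0 ≤ q i) (hq1 : ∑ i, q i = 1) : tvDist p q ≤ 1 := by
  have : ∑ i, |p i - q i| ≤ ∑ i, (p i + q i) :=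
    Finset.sum_le_sum fun i _ => (abs_sub _ _).trans_eq <| by
      rw [abs_of_nonneg (hp0 i), abs_of_nonneg (hq0 i)]
  rw [Finset.sum_add_distrib, hp1, hq1] at this
  unfold tvDist
  linarith

theorem abs_sum_mul_le_of_abs_le {p f : ι → ℝ} {B : ℝ} (hp0 : ∀ i, 0 ≤ p i)
    (hp1 : ∑ i, p i = 1) (hf : ∀ i, |f i| ≤ B) : |∑ i, p i * f i| ≤ B :=
  calc |∑ i, p i * f i| ≤ ∑ i, |p i * f i| := Finset.abs_sum_le_sum_abs _ _
    _ ≤ ∑ i, p i * B := Finset.sum_le_sum fun i _ => by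
        rw [abs_mul, abs_of_nonneg (hp0 i)]
        exact mul_le_mul_of_nonneg_left (hf i) (hp0 i)
    _ = B := by rw [← Finset.sum_mul, hp1, one_mul]

theorem abs_sum_mul_sub_sum_mul_le {p q f : ι → ℝ} {B : ℝ} (hf : ∀ i, |f i| ≤ B) :
    |∑ i, p i * f i - ∑ i, q i * f i| ≤ 2 * B * tvDist p q :=
  calc |∑ i, p i * f i - ∑ i, q i * f i| = |∑ i, (p i - q i) * f i| := by
        simp only [sub_mul, Finset.sum_sub_distrib]
    _ ≤ ∑ i, |p i - q i| * B := by
        refine (Finset.abs_sum_le_sum_abs _ _).trans (Finset.sum_le_sum fun i _ => ?_)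
        rw [abs_mul]
        exact mul_le_mul_of_nonneg_left (hf i) (abs_nonneg _)
    _ = 2 * B * tvDist p q := by rw [tvDist, ← Finset.sum_mul]; ring

end Distributions

variable {S A Rw : Type*}

abbrev HistOfLength (S A Rw : Type*) (n : ℕ) := List.Vector (S × A × Rw) n × S

theorem histProb_nonneg {ρ : S → ℝ} {π : Hist S A Rw → A → ℝ} {m : S → A → Rw × S → ℝ}
    (hρ0 : ∀ s, 0 ≤ ρ s) (hπ0 : ∀ h a, 0 ≤ π h a) (hm0 : ∀ s a x, 0 ≤ m s a x) :
    ∀ l s, 0 ≤ histProb ρ π m l s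
  | [], s => hρ0 s
  | (_, _, _) :: l, _ =>
    mul_nonneg (mul_nonneg (histProb_nonneg hρ0 hπ0 hm0 l _) (hπ0 _ _)) (hm0 _ _ _)

namespace HistOfLength

variable {n : ℕ}

def toHist (h : HistOfLength S A Rw n) : Hist S A Rw := (h.1.toList, h.2)

@[simp]
theorem length_toHist (h : HistOfLength S A Rw n) : h.toHist.1.length = n :=
  h.1.toList_length

@[simp]
theorem snd_toHist (h : HistOfLength S A Rw n) : h.toHist.2 = h.2 := rfl

def extend (h : HistOfLength S A Rw n) (a : A) (x : Rw × S) : HistOfLength S A Rw (n + 1) :=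
  (h.1.cons (h.2, a, x.1), x.2)

def extendEquiv (S A Rw : Type*) (n : ℕ) :
    HistOfLength S A Rw n × A × (Rw × S) ≃ HistOfLength S A Rw (n + 1) where
  toFun p := p.1.extend p.2.1 p.2.2
  invFun h := ((h.1.tail, h.1.head.1), h.1.head.2.1, h.1.head.2.2, h.2)
  left_inv := fun _ => by simp [extend]
  right_inv := fun _ => by simp [extend]

def sigmaEquiv (S A Rw : Type*) : (Σ n, HistOfLength S A Rw n) ≃ Hist S A Rw where
  toFun p := p.2.toHist
  invFun h := ⟨h.1.length, ⟨h.1, rfl⟩, h.2⟩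
  left_inv := fun ⟨_, ⟨_, hl⟩, _⟩ => by subst hl; rfl
  right_inv := fun _ => rfl

noncomputable def prob (ρ : S → ℝ) (π : Hist S A Rw → A → ℝ) (m : S → A → Rw × S → ℝ)
    (h : HistOfLength S A Rw n) : ℝ :=
  histProb ρ π m h.1.toList h.2

variable {ρ : S → ℝ} {π : Hist S A Rw → A → ℝ} {m : S → A → Rw × S → ℝ}

@[simp]
theorem prob_extend (h : HistOfLength S A Rw n) (a : A) (x : Rw × S) :
    (h.extend a x).prob ρ π m = h.prob ρ π m * π h.toHist a * m h.2 a x := by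
  simp [prob, extend, toHist, histProb]

theorem prob_nonneg (hρ0 : ∀ s, 0 ≤ ρ s) (hπ0 : ∀ h a, 0 ≤ π h a)
    (hm0 : ∀ s a x, 0 ≤ m s a x) (h : HistOfLength S A Rw n) : 0 ≤ h.prob ρ π m :=
  histProb_nonneg hρ0 hπ0 hm0 _ _

variable [Fintype S] [Fintype A] [Fintype Rw]

theorem sum_zero {M : Type*} [AddCommMonoid M] (f : HistOfLength S A Rw 0 → M) :
    ∑ h, f h = ∑ s, f (List.Vector.nil, s) := by
  rw [Fintype.sum_prod_type_right]
  exact Fintype.sum_congr _ _ fun s => Fintype.sum_subsingleton _ _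

theorem sum_succ {M : Type*} [AddCommMonoid M] (f : HistOfLength S A Rw (n + 1) → M) :
    ∑ h, f h = ∑ h : HistOfLength S A Rw n, ∑ a, ∑ x, f (h.extend a x) := by
  rw [← (extendEquiv S A Rw n).sum_comp, Fintype.sum_prod_type]
  exact Fintype.sum_congr _ _ fun h => Fintype.sum_prod_type _

theorem sum_prob (hρ1 : ∑ s, ρ s = 1) (hπ1 : ∀ h, ∑ a, π h a = 1)
    (hm1 : ∀ s a, ∑ x, m s a x = 1) : ∀ n, ∑ h : HistOfLength S A Rw n, h.prob ρ π m = 1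
  | 0 => by simpa [sum_zero, prob, histProb] using hρ1
  | n + 1 => by
    simp only [sum_succ, prob_extend, ← Finset.mul_sum, hm1, mul_one, hπ1]
    exact sum_prob hρ1 hπ1 hm1 n

end HistOfLength

open HistOfLength

variable [Fintype S] [Fintype A] [Fintype Rw]

theorem summable_and_hasSum_sum_ofLength {g : Hist S A Rw → ℝ}
    (hg : Summable fun n => ∑ h : HistOfLength S A Rw n, |g h.toHist|) :
    Summable g ∧ HasSum (fun n => ∑ h : HistOfLength S A Rw n, g h.toHist) (∑' h, g h) := by
  set e := HistOfLength.sigmaEquiv S A Rw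
  have habs : Summable fun p => |g (e p)| :=
    (summable_sigma_of_nonneg fun _ => abs_nonneg _).2
      ⟨fun _ => .of_finite, by simp only [tsum_fintype]; exact hg⟩
  have hs : Summable (g ∘ e) := habs.of_abs
  refine ⟨e.summable_iff.1 hs, ?_⟩
  rw [← e.tsum_eq]
  exact hs.hasSum.sigma fun n => hasSum_fintype _

def expectedReward (π : Hist S A Rw → A → ℝ) (rval : Rw → ℝ) (m : S → A → Rw × S → ℝ)
    (h : Hist S A Rw) : ℝ :=
  ∑ a, π h a * ∑ x : Rw × S, m h.2 a x * rval x.1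

noncomputable def expectedTV (π : Hist S A Rw → A → ℝ) (m mhat : S → A → Rw × S → ℝ)
    (h : Hist S A Rw) : ℝ :=
  ∑ a, π h a * tvDist (m h.2 a) (mhat h.2 a)

variable {ρ : S → ℝ} {π : Hist S A Rw → A → ℝ} {rval : Rw → ℝ} {γ rmax : ℝ}
  {m mhat : S → A → Rw × S → ℝ}

theorem abs_expectedReward_le (hrval : ∀ r, |rval r| ≤ rmax) (hπ0 : ∀ h a, 0 ≤ π h a)
    (hπ1 : ∀ h, ∑ a, π h a = 1) (hm0 : ∀ s a x, 0 ≤ m s a x) (hm1 : ∀ s a, ∑ x, m s a x = 1)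
    (h : Hist S A Rw) : |expectedReward π rval m h| ≤ rmax :=
  abs_sum_mul_le_of_abs_le (hπ0 h) (hπ1 h) fun a =>
    abs_sum_mul_le_of_abs_le (hm0 h.2 a) (hm1 h.2 a) fun x => hrval x.1

theorem abs_expectedReward_sub_le (hrval : ∀ r, |rval r| ≤ rmax) (hπ0 : ∀ h a, 0 ≤ π h a)
    (h : Hist S A Rw) :
    |expectedReward π rval m h - expectedReward π rval mhat h| ≤
      2 * rmax * expectedTV π m mhat h :=
  calc |expectedReward π rval m h - expectedReward π rval mhat h|
      = |∑ a, π h a *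
          (∑ x : Rw × S, m h.2 a x * rval x.1 - ∑ x : Rw × S, mhat h.2 a x * rval x.1)| := by
        simp only [expectedReward, mul_sub, Finset.sum_sub_distrib]
    _ ≤ ∑ a, π h a * (2 * rmax * tvDist (m h.2 a) (mhat h.2 a)) := by
        refine (Finset.abs_sum_le_sum_abs _ _).trans (Finset.sum_le_sum fun a _ => ?_)
        rw [abs_mul, abs_of_nonneg (hπ0 h a)]
        exact mul_le_mul_of_nonneg_left (abs_sum_mul_sub_sum_mul_le fun x => hrval x.1) (hπ0 h a)
    _ = 2 * rmax * expectedTV π m mhat h := by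
        rw [expectedTV, Finset.mul_sum]
        exact Finset.sum_congr rfl fun a _ => by ring

theorem expectedTV_nonneg (hπ0 : ∀ h a, 0 ≤ π h a) (h : Hist S A Rw) :
    0 ≤ expectedTV π m mhat h :=
  Finset.sum_nonneg fun a _ => mul_nonneg (hπ0 h a) (tvDist_nonneg _ _)

theorem abs_expectedTV_le_one (hπ0 : ∀ h a, 0 ≤ π h a) (hπ1 : ∀ h, ∑ a, π h a = 1)
    (hm0 : ∀ s a x, 0 ≤ m s a x) (hm1 : ∀ s a, ∑ x, m s a x = 1)
    (hmhat0 : ∀ s a x, 0 ≤ mhat s a x) (hmhat1 : ∀ s a, ∑ x, mhat s a x = 1)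
    (h : Hist S A Rw) : |expectedTV π m mhat h| ≤ 1 :=
  abs_sum_mul_le_of_abs_le (hπ0 h) (hπ1 h) fun a => by
    rw [abs_of_nonneg (tvDist_nonneg _ _)]
    exact tvDist_le_one (hm0 h.2 a) (hm1 h.2 a) (hmhat0 h.2 a) (hmhat1 h.2 a)

theorem summable_and_hasSum_discounted (hγ0 : 0 ≤ γ) (hγ1 : γ < 1)
    (hρ0 : ∀ s, 0 ≤ ρ s) (hρ1 : ∑ s, ρ s = 1)
    (hπ0 : ∀ h a, 0 ≤ π h a) (hπ1 : ∀ h, ∑ a, π h a = 1)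
    (hm0 : ∀ s a x, 0 ≤ m s a x) (hm1 : ∀ s a, ∑ x, m s a x = 1)
    {w : Hist S A Rw → ℝ} {B : ℝ} (hw : ∀ h, |w h| ≤ B) :
    Summable (fun h : Hist S A Rw => γ ^ h.1.length * histProb ρ π m h.1 h.2 * w h) ∧
      HasSum (fun n => γ ^ n * ∑ h : HistOfLength S A Rw n, h.prob ρ π m * w h.toHist)
        (∑' h : Hist S A Rw, γ ^ h.1.length * histProb ρ π m h.1 h.2 * w h) := by
  have hterm : ∀ n (h : HistOfLength S A Rw n),
      γ ^ h.toHist.1.length * histProb ρ π m h.toHist.1 h.toHist.2 * w h.toHist =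
        γ ^ n * (h.prob ρ π m * w h.toHist) := by
    intro n h
    rw [length_toHist, mul_assoc]
    rfl
  have hbound : ∀ n, ∑ h : HistOfLength S A Rw n, |γ ^ n * (h.prob ρ π m * w h.toHist)| ≤
      B * γ ^ n := fun n =>
    calc ∑ h : HistOfLength S A Rw n, |γ ^ n * (h.prob ρ π m * w h.toHist)|
        ≤ ∑ h : HistOfLength S A Rw n, γ ^ n * (h.prob ρ π m * B) := Finset.sum_le_sum fun h _ => by
          rw [abs_mul, abs_mul, abs_of_nonneg (pow_nonneg hγ0 n),
            abs_of_nonneg (prob_nonneg hρ0 hπ0 hm0 h)]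
          gcongr
          · exact prob_nonneg hρ0 hπ0 hm0 h
          · exact hw _
      _ = B * γ ^ n := by rw [← Finset.mul_sum, ← Finset.sum_mul, sum_prob hρ1 hπ1 hm1]; ring
  obtain ⟨hs, hsum⟩ := summable_and_hasSum_sum_ofLength (g := fun h : Hist S A Rw =>
    γ ^ h.1.length * histProb ρ π m h.1 h.2 * w h) <| by
      simp only [hterm]
      exact .of_nonneg_of_le (fun _ => Finset.sum_nonneg fun _ _ => abs_nonneg _) hbound
        ((summable_geometric_of_lt_one hγ0 hγ1).mul_left B)
  refine ⟨hs, ?_⟩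
  simpa only [hterm, Finset.mul_sum] using hsum

noncomputable def rewardAt (ρ : S → ℝ) (π : Hist S A Rw → A → ℝ) (rval : Rw → ℝ)
    (m : S → A → Rw × S → ℝ) (n : ℕ) : ℝ :=
  ∑ h : HistOfLength S A Rw n, h.prob ρ π m * expectedReward π rval m h.toHist

theorem hasSum_rewardAt (hγ0 : 0 ≤ γ) (hγ1 : γ < 1) (hrval : ∀ r, |rval r| ≤ rmax)
    (hρ0 : ∀ s, 0 ≤ ρ s) (hρ1 : ∑ s, ρ s = 1)
    (hπ0 : ∀ h a, 0 ≤ π h a) (hπ1 : ∀ h, ∑ a, π h a = 1)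
    (hm0 : ∀ s a x, 0 ≤ m s a x) (hm1 : ∀ s a, ∑ x, m s a x = 1) :
    HasSum (fun n => γ ^ n * rewardAt ρ π rval m n) (Jval γ rval ρ π m) :=
  (summable_and_hasSum_discounted hγ0 hγ1 hρ0 hρ1 hπ0 hπ1 hm0 hm1
    (abs_expectedReward_le hrval hπ0 hπ1 hm0 hm1)).2

noncomputable def expectedTVAt (ρ : S → ℝ) (π : Hist S A Rw → A → ℝ)
    (m mhat : S → A → Rw × S → ℝ) (n : ℕ) : ℝ :=
  ∑ h : HistOfLength S A Rw n, h.prob ρ π mhat * expectedTV π m mhat h.toHist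

theorem expectedTVAt_nonneg (hρ0 : ∀ s, 0 ≤ ρ s) (hπ0 : ∀ h a, 0 ≤ π h a)
    (hmhat0 : ∀ s a x, 0 ≤ mhat s a x) (n : ℕ) : 0 ≤ expectedTVAt ρ π m mhat n :=
  Finset.sum_nonneg fun h _ =>
    mul_nonneg (prob_nonneg hρ0 hπ0 hmhat0 h) (expectedTV_nonneg hπ0 _)

theorem sum_abs_prob_sub_succ_le (hπ0 : ∀ h a, 0 ≤ π h a) (hπ1 : ∀ h, ∑ a, π h a = 1)
    (hm0 : ∀ s a x, 0 ≤ m s a x) (hm1 : ∀ s a, ∑ x, m s a x = 1)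
    (hρ0 : ∀ s, 0 ≤ ρ s) (hmhat0 : ∀ s a x, 0 ≤ mhat s a x) (n : ℕ) :
    ∑ h : HistOfLength S A Rw (n + 1), |h.prob ρ π m - h.prob ρ π mhat| ≤
      ∑ h : HistOfLength S A Rw n, |h.prob ρ π m - h.prob ρ π mhat| +
        2 * expectedTVAt ρ π m mhat n := by
  rw [sum_succ, expectedTVAt, Finset.mul_sum, ← Finset.sum_add_distrib]
  refine Finset.sum_le_sum fun h _ => ?_
  set P := h.prob ρ π m
  set Q := h.prob ρ π mhat
  calc ∑ a, ∑ x, |P * π h.toHist a * m h.2 a x - Q * π h.toHist a * mhat h.2 a x|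
      ≤ ∑ a, ∑ x, π h.toHist a * (|P - Q| * m h.2 a x + Q * |m h.2 a x - mhat h.2 a x|) := by
        refine Finset.sum_le_sum fun a _ => Finset.sum_le_sum fun x _ => ?_
        have : P * π h.toHist a * m h.2 a x - Q * π h.toHist a * mhat h.2 a x =
            π h.toHist a * ((P - Q) * m h.2 a x + Q * (m h.2 a x - mhat h.2 a x)) := by ring
        rw [this, abs_mul, abs_of_nonneg (hπ0 _ a)]
        refine mul_le_mul_of_nonneg_left ((abs_add_le _ _).trans ?_) (hπ0 _ a)
        rw [abs_mul, abs_mul, abs_of_nonneg (hm0 _ _ _),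
          abs_of_nonneg (prob_nonneg hρ0 hπ0 hmhat0 h)]
    _ = ∑ a, π h.toHist a * (|P - Q| + 2 * Q * tvDist (m h.2 a) (mhat h.2 a)) := by
        refine Finset.sum_congr rfl fun a _ => ?_
        rw [← Finset.mul_sum, Finset.sum_add_distrib, ← Finset.mul_sum, ← Finset.mul_sum, hm1,
          tvDist]
        ring
    _ = (∑ a, π h.toHist a) * |P - Q| + 2 * Q * expectedTV π m mhat h.toHist := by
        rw [expectedTV, Finset.mul_sum, Finset.sum_mul, ← Finset.sum_add_distrib]
        exact Finset.sum_congr rfl fun a _ => by rw [snd_toHist]; ring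
    _ = |P - Q| + 2 * (Q * expectedTV π m mhat h.toHist) := by rw [hπ1]; ring

theorem sum_abs_prob_sub_le (hπ0 : ∀ h a, 0 ≤ π h a) (hπ1 : ∀ h, ∑ a, π h a = 1)
    (hm0 : ∀ s a x, 0 ≤ m s a x) (hm1 : ∀ s a, ∑ x, m s a x = 1)
    (hρ0 : ∀ s, 0 ≤ ρ s) (hmhat0 : ∀ s a x, 0 ≤ mhat s a x) :
    ∀ n, ∑ h : HistOfLength S A Rw n, |h.prob ρ π m - h.prob ρ π mhat| ≤
      2 * ∑ k ∈ Finset.range n, expectedTVAt ρ π m mhat k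
  | 0 => by simp [prob, histProb]
  | n + 1 => by
    have := sum_abs_prob_sub_le hπ0 hπ1 hm0 hm1 hρ0 hmhat0 n
    have := sum_abs_prob_sub_succ_le hπ0 hπ1 hm0 hm1 hρ0 hmhat0 n
    rw [Finset.sum_range_succ]
    linarith

theorem abs_rewardAt_sub_le (hr : 0 ≤ rmax) (hrval : ∀ r, |rval r| ≤ rmax)
    (hπ0 : ∀ h a, 0 ≤ π h a) (hπ1 : ∀ h, ∑ a, π h a = 1)
    (hm0 : ∀ s a x, 0 ≤ m s a x) (hm1 : ∀ s a, ∑ x, m s a x = 1)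
    (hρ0 : ∀ s, 0 ≤ ρ s) (hmhat0 : ∀ s a x, 0 ≤ mhat s a x) (n : ℕ) :
    |rewardAt ρ π rval m n - rewardAt ρ π rval mhat n| ≤
      2 * rmax * ∑ k ∈ Finset.range (n + 1), expectedTVAt ρ π m mhat k := by
  have hsplit : rewardAt ρ π rval m n - rewardAt ρ π rval mhat n =
      ∑ h : HistOfLength S A Rw n,
        ((h.prob ρ π m - h.prob ρ π mhat) * expectedReward π rval m h.toHist +
          h.prob ρ π mhat *
            (expectedReward π rval m h.toHist - expectedReward π rval mhat h.toHist)) := by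
    rw [rewardAt, rewardAt, ← Finset.sum_sub_distrib]
    exact Finset.sum_congr rfl fun h _ => by ring
  calc |rewardAt ρ π rval m n - rewardAt ρ π rval mhat n|
      ≤ ∑ h : HistOfLength S A Rw n, (|h.prob ρ π m - h.prob ρ π mhat| * rmax +
          h.prob ρ π mhat * (2 * rmax * expectedTV π m mhat h.toHist)) := by
        rw [hsplit]
        refine (Finset.abs_sum_le_sum_abs _ _).trans (Finset.sum_le_sum fun h _ => ?_)
        refine (abs_add_le _ _).trans (add_le_add ?_ ?_)
        · rw [abs_mul]
          exact mul_le_mul_of_nonneg_left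
            (abs_expectedReward_le hrval hπ0 hπ1 hm0 hm1 _) (abs_nonneg _)
        · rw [abs_mul, abs_of_nonneg (prob_nonneg hρ0 hπ0 hmhat0 h)]
          exact mul_le_mul_of_nonneg_left (abs_expectedReward_sub_le hrval hπ0 _)
            (prob_nonneg hρ0 hπ0 hmhat0 h)
    _ = (∑ h : HistOfLength S A Rw n, |h.prob ρ π m - h.prob ρ π mhat|) * rmax +
          2 * rmax * expectedTVAt ρ π m mhat n := by
        rw [Finset.sum_add_distrib, ← Finset.sum_mul, expectedTVAt, Finset.mul_sum]
        congr 1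
        exact Finset.sum_congr rfl fun h _ => by ring
    _ ≤ (2 * ∑ k ∈ Finset.range n, expectedTVAt ρ π m mhat k) * rmax +
          2 * rmax * expectedTVAt ρ π m mhat n := by
        gcongr
        exact sum_abs_prob_sub_le hπ0 hπ1 hm0 hm1 hρ0 hmhat0 n
    _ = 2 * rmax * ∑ k ∈ Finset.range (n + 1), expectedTVAt ρ π m mhat k := by
        rw [Finset.sum_range_succ]
        ring

theorem abs_sum_discounted_rewardAt_sub_le (hγ0 : 0 ≤ γ) (hγ1 : γ < 1) (hr : 0 ≤ rmax)
    (hrval : ∀ r, |rval r| ≤ rmax) (hπ0 : ∀ h a, 0 ≤ π h a) (hπ1 : ∀ h, ∑ a, π h a = 1)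
    (hm0 : ∀ s a x, 0 ≤ m s a x) (hm1 : ∀ s a, ∑ x, m s a x = 1)
    (hρ0 : ∀ s, 0 ≤ ρ s) (hmhat0 : ∀ s a x, 0 ≤ mhat s a x) (N : ℕ) :
    |∑ n ∈ Finset.range N, (γ ^ n * rewardAt ρ π rval m n - γ ^ n * rewardAt ρ π rval mhat n)| ≤
      2 * rmax / (1 - γ) * ∑ k ∈ Finset.range N, γ ^ k * expectedTVAt ρ π m mhat k :=
  calc |∑ n ∈ Finset.range N, (γ ^ n * rewardAt ρ π rval m n - γ ^ n * rewardAt ρ π rval mhat n)|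
      ≤ ∑ n ∈ Finset.range N,
          γ ^ n * (2 * rmax * ∑ k ∈ Finset.range (n + 1), expectedTVAt ρ π m mhat k) := by
        refine (Finset.abs_sum_le_sum_abs _ _).trans (Finset.sum_le_sum fun n _ => ?_)
        rw [← mul_sub, abs_mul, abs_of_nonneg (pow_nonneg hγ0 n)]
        exact mul_le_mul_of_nonneg_left
          (abs_rewardAt_sub_le hr hrval hπ0 hπ1 hm0 hm1 hρ0 hmhat0 n) (pow_nonneg hγ0 n)
    _ = 2 * rmax * ∑ n ∈ Finset.range N,
          γ ^ n * ∑ k ∈ Finset.range (n + 1), expectedTVAt ρ π m mhat k := by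
        rw [Finset.mul_sum]
        exact Finset.sum_congr rfl fun n _ => by ring
    _ ≤ 2 * rmax * ((∑ k ∈ Finset.range N, γ ^ k * expectedTVAt ρ π m mhat k) / (1 - γ)) :=
        mul_le_mul_of_nonneg_left
          (sum_pow_mul_sum_range_succ_le hγ0 hγ1 (expectedTVAt_nonneg hρ0 hπ0 hmhat0) N)
          (by positivity)
    _ = 2 * rmax / (1 - γ) * ∑ k ∈ Finset.range N, γ ^ k * expectedTVAt ρ π m mhat k := by
        ring

theorem abs_Jval_sub_le (hγ0 : 0 ≤ γ) (hγ1 : γ < 1) (hr : 0 ≤ rmax)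
    (hrval : ∀ r, |rval r| ≤ rmax) (hρ0 : ∀ s, 0 ≤ ρ s) (hρ1 : ∑ s, ρ s = 1)
    (hπ0 : ∀ h a, 0 ≤ π h a) (hπ1 : ∀ h, ∑ a, π h a = 1)
    (hm0 : ∀ s a x, 0 ≤ m s a x) (hm1 : ∀ s a, ∑ x, m s a x = 1)
    (hmhat0 : ∀ s a x, 0 ≤ mhat s a x) (hmhat1 : ∀ s a, ∑ x, mhat s a x = 1) :
    |Jval γ rval ρ π m - Jval γ rval ρ π mhat| ≤
      2 * rmax / (1 - γ) * ∑' h : Hist S A Rw,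
        γ ^ h.1.length * histProb ρ π mhat h.1 h.2 * expectedTV π m mhat h := by
  have hdiff := (hasSum_rewardAt hγ0 hγ1 hrval hρ0 hρ1 hπ0 hπ1 hm0 hm1).sub
    (hasSum_rewardAt hγ0 hγ1 hrval hρ0 hρ1 hπ0 hπ1 hmhat0 hmhat1)
  have hD := (summable_and_hasSum_discounted hγ0 hγ1 hρ0 hρ1 hπ0 hπ1 hmhat0 hmhat1
    (abs_expectedTV_le_one hπ0 hπ1 hm0 hm1 hmhat0 hmhat1)).2
  refine le_of_tendsto' hdiff.tendsto_sum_nat.abs fun N =>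
    (abs_sum_discounted_rewardAt_sub_le hγ0 hγ1 hr hrval hπ0 hπ1 hm0 hm1 hρ0 hmhat0 N).trans ?_
  refine mul_le_mul_of_nonneg_left (sum_le_hasSum _ (fun k _ => ?_) hD)
    (div_nonneg (by linarith) (by linarith))
  exact mul_nonneg (pow_nonneg hγ0 k) (expectedTVAt_nonneg hρ0 hπ0 hmhat0 k)

theorem sum_occupancy_mul [DecidableEq S] (hγ0 : 0 ≤ γ) (hγ1 : γ < 1)
    (hρ0 : ∀ s, 0 ≤ ρ s) (hρ1 : ∑ s, ρ s = 1)
    (hπ0 : ∀ h a, 0 ≤ π h a) (hπ1 : ∀ h, ∑ a, π h a = 1)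
    (hm0 : ∀ s a x, 0 ≤ m s a x) (hm1 : ∀ s a, ∑ x, m s a x = 1) (c : S → A → ℝ) :
    ∑ s, ∑ a, occupancy γ ρ π m s a * c s a =
      (1 - γ) * ∑' h : Hist S A Rw,
        γ ^ h.1.length * histProb ρ π m h.1 h.2 * ∑ a, π h a * c h.2 a := by
  set F : S → A → Hist S A Rw → ℝ := fun s a h =>
    (if h.2 = s then γ ^ h.1.length * histProb ρ π m h.1 h.2 * π h a else 0) * c s a
  have hF : ∀ s a, Summable (F s a) := by
    intro s a
    have hw : ∀ h, |if h.2 = s then π h a else 0| ≤ 1 := by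
      intro h
      split_ifs
      · rw [abs_of_nonneg (hπ0 h a), ← hπ1 h]
        exact Finset.single_le_sum (fun a _ => hπ0 h a) (Finset.mem_univ a)
      · simp
    refine ((summable_and_hasSum_discounted hγ0 hγ1 hρ0 hρ1 hπ0 hπ1 hm0 hm1 hw).1.mul_right
      (c s a)).congr fun h => ?_
    simp only [F, mul_ite, mul_zero]
  calc ∑ s, ∑ a, occupancy γ ρ π m s a * c s a = (1 - γ) * ∑ s, ∑ a, ∑' h, F s a h := by
        simp only [F, occupancy, Finset.mul_sum, mul_assoc, tsum_mul_right]
    _ = (1 - γ) * ∑' h, ∑ s, ∑ a, F s a h := by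
        rw [Summable.tsum_finsetSum fun s _ => summable_sum fun a _ => hF s a]
        simp only [Summable.tsum_finsetSum fun a _ => hF _ a]
    _ = (1 - γ) * ∑' h : Hist S A Rw,
          γ ^ h.1.length * histProb ρ π m h.1 h.2 * ∑ a, π h a * c h.2 a := by
        simp only [F, ite_mul, zero_mul, Finset.sum_comm (γ := S), Finset.sum_ite_eq,
          Finset.mem_univ, if_true, Finset.mul_sum, mul_assoc]

end MDP

/-- General simulation lemma: for any history-dependent policy `π` and two models
`m, m̂` with rewards bounded by `r_max`,
`|J(π,m) − J(π,m̂)| ≤ (2r_max/(1−γ)²)·E_{(s,a)∼d^π_{m̂}}[TV(m(s,a), m̂(s,a))]`. -/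
theorem general_simulation_lemma {S A Rw : Type*}
    [Fintype S] [Fintype A] [Fintype Rw] [DecidableEq S]
    (γ rmax : ℝ) (hγ0 : 0 ≤ γ) (hγ1 : γ < 1) (hr : 0 < rmax)
    (rval : Rw → ℝ) (hrval : ∀ r, |rval r| ≤ rmax)
    (ρ : S → ℝ) (hρ0 : ∀ s, 0 ≤ ρ s) (hρ1 : ∑ s, ρ s = 1)
    (π : Hist S A Rw → A → ℝ)
    (hπ0 : ∀ h a, 0 ≤ π h a) (hπ1 : ∀ h, ∑ a, π h a = 1)
    (m mhat : S → A → Rw × S → ℝ)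
    (hm0 : ∀ s a x, 0 ≤ m s a x) (hm1 : ∀ s a, ∑ x, m s a x = 1)
    (hmhat0 : ∀ s a x, 0 ≤ mhat s a x) (hmhat1 : ∀ s a, ∑ x, mhat s a x = 1) :
    |Jval γ rval ρ π m - Jval γ rval ρ π mhat| ≤
      (2 * rmax / (1 - γ) ^ 2) *
        ∑ s, ∑ a, occupancy γ ρ π mhat s a *
          ((1 / 2) * ∑ x, |m s a x - mhat s a x|) := by
  have hocc := MDP.sum_occupancy_mul hγ0 hγ1 hρ0 hρ1 hπ0 hπ1 hmhat0 hmhat1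
    fun s a => MDP.tvDist (m s a) (mhat s a)
  have hγ : (1 - γ) ≠ 0 := by linarith
  calc |Jval γ rval ρ π m - Jval γ rval ρ π mhat|
      ≤ 2 * rmax / (1 - γ) * ∑' h : Hist S A Rw,
          γ ^ h.1.length * histProb ρ π mhat h.1 h.2 * MDP.expectedTV π m mhat h :=
        MDP.abs_Jval_sub_le hγ0 hγ1 hr.le hrval hρ0 hρ1 hπ0 hπ1 hm0 hm1 hmhat0 hmhat1
    _ = (2 * rmax / (1 - γ) ^ 2) * ∑ s, ∑ a, occupancy γ ρ π mhat s a *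
          ((1 / 2) * ∑ x, |m s a x - mhat s a x|) := by
        simp only [MDP.expectedTV, MDP.tvDist] at hocc ⊢
        rw [hocc]
        field_simp
end

section
/- Unrolling a discounted error recursion over an occupancy measure: if a function Δ on histories satisfies Δ(h_t) ≤ E_{a∼π(h_t)}[ε(s_t,a)] + γ·E_{a∼π(h_t), (r,s')∼m̂(s_t,a)}[Δ(h_{t+1})] for all t, with Δ bounded and ε ≥ 0, then E_{s₀∼ρ}[Δ(s₀)] ≤ (1/(1−γ))·E_{(s,a)∼d^π_{m̂}}[ε(s,a)], where d^π_{m̂} is the normalized discounted occupancy measure. -/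
/-! Write `T n` and `E n` for the expectations of `Δ (h_n)` and of the one-step error
`∑ a, π (h_n, a) ε (s_n, a)`. Taking expectations in the recursion gives `T n ≤ E n + γ T (n + 1)`;
unrolling it and using `γ ^ n T n ≤ γ ^ n B → 0` gives `T 0 ≤ ∑ γ ^ n E n`. Grouping histories by
length identifies this series with `∑ h, γ ^ |h| P(h) ∑ a, π (h, a) ε (s_h, a)`, which is
`(1 - γ)⁻¹` times the expectation of `ε` under the occupancy measure. -/

open Finset

section HistoryDecomposition

variable (S A Rw : Type*)

def histVectorSuccEquiv (n : ℕ) :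
    (List.Vector (S × A × Rw) n × S) × A × (Rw × S) ≃
      List.Vector (S × A × Rw) (n + 1) × S where
  toFun p := ((p.1.2, p.2.1, p.2.2.1) ::ᵥ p.1.1, p.2.2.2)
  invFun p := ((p.1.tail, p.1.head.1), p.1.head.2.1, (p.1.head.2.2, p.2))
  left_inv := by
    rintro ⟨⟨l, s⟩, a, r, s'⟩
    simp
  right_inv := by
    rintro ⟨v, s'⟩
    show (v.head ::ᵥ v.tail, s') = (v, s')
    rw [v.cons_head_tail]

def histSigmaEquiv : (Σ n : ℕ, List.Vector (S × A × Rw) n × S) ≃ Hist S A Rw where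
  toFun p := (p.2.1.toList, p.2.2)
  invFun h := ⟨h.1.length, (⟨h.1, rfl⟩, h.2)⟩
  left_inv := by
    rintro ⟨n, ⟨⟨l, hl⟩, s⟩⟩
    subst hl
    rfl
  right_inv _ := rfl

@[simp]
theorem histSigmaEquiv_apply {n : ℕ} (q : List.Vector (S × A × Rw) n × S) :
    histSigmaEquiv S A Rw ⟨n, q⟩ = (q.1.toList, q.2) :=
  rfl

variable {S A Rw} [Fintype S] [Fintype A] [Fintype Rw]

theorem sum_histVector_succ {M : Type*} [AddCommMonoid M] {n : ℕ}
    (g : List.Vector (S × A × Rw) (n + 1) × S → M) :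
    ∑ p, g p = ∑ q : List.Vector (S × A × Rw) n × S, ∑ a : A, ∑ x : Rw × S,
      g ((q.2, a, x.1) ::ᵥ q.1, x.2) := by
  rw [← (histVectorSuccEquiv S A Rw n).sum_comp g, Fintype.sum_prod_type]
  exact sum_congr rfl fun q _ => Fintype.sum_prod_type _

end HistoryDecomposition

theorem histProb_nonneg {S A Rw : Type*} {ρ : S → ℝ} {π : Hist S A Rw → A → ℝ}
    {m : S → A → Rw × S → ℝ} (hρ0 : ∀ s, 0 ≤ ρ s) (hπ0 : ∀ h a, 0 ≤ π h a)
    (hm0 : ∀ s a x, 0 ≤ m s a x) : ∀ (l : List (S × A × Rw)) (s : S), 0 ≤ histProb ρ π m l s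
  | [], s => hρ0 s
  | (s, a, r) :: rest, s' =>
    mul_nonneg (mul_nonneg (histProb_nonneg hρ0 hπ0 hm0 rest s) (hπ0 _ a)) (hm0 s a (r, s'))

section HistoryExpectation

variable {S A Rw : Type*} [Fintype S] [Fintype A] [Fintype Rw]
  {ρ : S → ℝ} {π : Hist S A Rw → A → ℝ} {m : S → A → Rw × S → ℝ}

variable (ρ π m) in
/-- The expectation of `f (h_n)`, where `h_n` is the history at time `n`. -/
noncomputable def histExpect (n : ℕ) (f : Hist S A Rw → ℝ) : ℝ :=
  ∑ q : List.Vector (S × A × Rw) n × S, histProb ρ π m q.1.toList q.2 * f (q.1.toList, q.2)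

theorem histExpect_zero (f : Hist S A Rw → ℝ) :
    histExpect ρ π m 0 f = ∑ s, ρ s * f ([], s) := by
  have : Unique (List.Vector (S × A × Rw) 0) := ⟨⟨List.Vector.nil⟩, List.Vector.eq_nil⟩
  simp [histExpect, Fintype.sum_prod_type, List.Vector.toList_empty, histProb]

theorem histExpect_succ (n : ℕ) (f : Hist S A Rw → ℝ) :
    histExpect ρ π m (n + 1) f = histExpect ρ π m n fun h =>
      ∑ a, π h a * ∑ x : Rw × S, m h.2 a x * f ((h.2, a, x.1) :: h.1, x.2) := by
  rw [histExpect, sum_histVector_succ]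
  refine sum_congr rfl fun q _ => ?_
  simp only [mul_sum, List.Vector.toList_cons, histProb]
  exact sum_congr rfl fun a _ => sum_congr rfl fun x _ => by ring

theorem histExpect_add_const_mul (n : ℕ) (f g : Hist S A Rw → ℝ) (c : ℝ) :
    histExpect ρ π m n (fun h => f h + c * g h) =
      histExpect ρ π m n f + c * histExpect ρ π m n g := by
  simp only [histExpect, mul_sum, ← sum_add_distrib]
  exact sum_congr rfl fun q _ => by ring

theorem histExpect_mono (hρ0 : ∀ s, 0 ≤ ρ s) (hπ0 : ∀ h a, 0 ≤ π h a)
    (hm0 : ∀ s a x, 0 ≤ m s a x) (n : ℕ) {f g : Hist S A Rw → ℝ} (hfg : ∀ h, f h ≤ g h) :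
    histExpect ρ π m n f ≤ histExpect ρ π m n g :=
  sum_le_sum fun _ _ => mul_le_mul_of_nonneg_left (hfg _) (histProb_nonneg hρ0 hπ0 hm0 _ _)

theorem histExpect_const (hρ1 : ∑ s, ρ s = 1) (hπ1 : ∀ h, ∑ a, π h a = 1)
    (hm1 : ∀ s a, ∑ x, m s a x = 1) (n : ℕ) (c : ℝ) :
    histExpect ρ π m n (fun _ => c) = c := by
  induction n with
  | zero => rw [histExpect_zero, ← sum_mul, hρ1, one_mul]
  | succ n ih => simpa only [histExpect_succ, ← sum_mul, hm1, hπ1, one_mul] using ih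

theorem histExpect_le_add_mul_succ (hρ0 : ∀ s, 0 ≤ ρ s) (hπ0 : ∀ h a, 0 ≤ π h a)
    (hm0 : ∀ s a x, 0 ≤ m s a x) {γ : ℝ} {Δ w : Hist S A Rw → ℝ}
    (hrec : ∀ h : Hist S A Rw, Δ h ≤ w h +
      γ * ∑ a, π h a * ∑ x : Rw × S, m h.2 a x * Δ ((h.2, a, x.1) :: h.1, x.2)) (n : ℕ) :
    histExpect ρ π m n Δ ≤ histExpect ρ π m n w + γ * histExpect ρ π m (n + 1) Δ := by
  rw [histExpect_succ, ← histExpect_add_const_mul]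
  exact histExpect_mono hρ0 hπ0 hm0 n hrec

end HistoryExpectation

theorem le_tsum_of_le_add_mul_succ {γ B : ℝ} {T E : ℕ → ℝ} (hγ0 : 0 ≤ γ) (hγ1 : γ < 1)
    (hTB : ∀ n, T n ≤ B) (hE : Summable fun k => γ ^ k * E k)
    (hrec : ∀ n, T n ≤ E n + γ * T (n + 1)) :
    T 0 ≤ ∑' k, γ ^ k * E k := by
  have unroll (n : ℕ) : T 0 ≤ ∑ k ∈ range n, γ ^ k * E k + γ ^ n * T n := by
    induction n with
    | zero => simp
    | succ n ih =>
      have := mul_le_mul_of_nonneg_left (hrec n) (pow_nonneg hγ0 n)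
      rw [sum_range_succ, pow_succ]
      linarith
  have bound (n : ℕ) : T 0 ≤ ∑ k ∈ range n, γ ^ k * E k + γ ^ n * B :=
    (unroll n).trans (by gcongr; exact hTB n)
  have hlim : Filter.Tendsto (fun n => ∑ k ∈ range n, γ ^ k * E k + γ ^ n * B) Filter.atTop
      (nhds (∑' k, γ ^ k * E k + 0 * B)) :=
    hE.hasSum.tendsto_sum_nat.add
      ((tendsto_pow_atTop_nhds_zero_of_lt_one hγ0 hγ1).mul_const B)
  simpa using ge_of_tendsto' hlim bound

noncomputable def discountedHistProb {S A Rw : Type*} (γ : ℝ) (ρ : S → ℝ) (π : Hist S A Rw → A → ℝ)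
    (m : S → A → Rw × S → ℝ) (h : Hist S A Rw) : ℝ :=
  γ ^ h.1.length * histProb ρ π m h.1 h.2

theorem discountedHistProb_nonneg {S A Rw : Type*} {γ : ℝ} {ρ : S → ℝ}
    {π : Hist S A Rw → A → ℝ} {m : S → A → Rw × S → ℝ} (hγ0 : 0 ≤ γ) (hρ0 : ∀ s, 0 ≤ ρ s)
    (hπ0 : ∀ h a, 0 ≤ π h a) (hm0 : ∀ s a x, 0 ≤ m s a x) (h : Hist S A Rw) :
    0 ≤ discountedHistProb γ ρ π m h :=
  mul_nonneg (pow_nonneg hγ0 _) (histProb_nonneg hρ0 hπ0 hm0 _ _)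

theorem occupancy_eq_tsum {S A Rw : Type*} [DecidableEq S] {γ : ℝ} {ρ : S → ℝ}
    {π : Hist S A Rw → A → ℝ} {m : S → A → Rw × S → ℝ} (s : S) (a : A) :
    occupancy γ ρ π m s a =
      (1 - γ) * ∑' h : Hist S A Rw, if h.2 = s then discountedHistProb γ ρ π m h * π h a else 0 :=
  rfl

section Discounting

variable {S A Rw : Type*} [Fintype S] [Fintype A] [Fintype Rw]
  {ρ : S → ℝ} {π : Hist S A Rw → A → ℝ} {m : S → A → Rw × S → ℝ} {γ : ℝ}

theorem hasSum_pow_mul_histExpect {f : Hist S A Rw → ℝ} {x : ℝ}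
    (hf : HasSum (fun h => discountedHistProb γ ρ π m h * f h) x) :
    HasSum (fun n => γ ^ n * histExpect ρ π m n f) x := by
  refine ((histSigmaEquiv S A Rw).hasSum_iff.mpr hf).sigma fun n => ?_
  convert hasSum_fintype _ using 1
  simp only [histExpect, mul_sum]
  refine sum_congr rfl fun q _ => ?_
  rw [Function.comp_apply, histSigmaEquiv_apply, discountedHistProb, List.Vector.toList_length,
    mul_assoc]

theorem summable_discountedHistProb (hγ0 : 0 ≤ γ) (hγ1 : γ < 1)
    (hρ0 : ∀ s, 0 ≤ ρ s) (hρ1 : ∑ s, ρ s = 1) (hπ0 : ∀ h a, 0 ≤ π h a)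
    (hπ1 : ∀ h, ∑ a, π h a = 1) (hm0 : ∀ s a x, 0 ≤ m s a x) (hm1 : ∀ s a, ∑ x, m s a x = 1) :
    Summable (discountedHistProb γ ρ π m) := by
  refine (histSigmaEquiv S A Rw).summable_iff.mp <|
    (summable_sigma_of_nonneg fun _ => ?_).mpr ⟨fun _ => .of_finite, ?_⟩
  · exact discountedHistProb_nonneg hγ0 hρ0 hπ0 hm0 _
  · have fiber (n : ℕ) : ∑ q : List.Vector (S × A × Rw) n × S,
        discountedHistProb γ ρ π m (q.1.toList, q.2) = γ ^ n * histExpect ρ π m n fun _ => 1 := by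
      simp only [histExpect, discountedHistProb, mul_sum, List.Vector.toList_length, mul_one]
    refine (summable_geometric_of_lt_one hγ0 hγ1).congr fun n => ?_
    simp only [tsum_fintype, Function.comp_apply, histSigmaEquiv_apply, fiber,
      histExpect_const hρ1 hπ1 hm1, mul_one]

theorem hasSum_discountedHistProb_mul_occupancy (hγ0 : 0 ≤ γ) (hγ1 : γ < 1)
    (hρ0 : ∀ s, 0 ≤ ρ s) (hρ1 : ∑ s, ρ s = 1) (hπ0 : ∀ h a, 0 ≤ π h a)
    (hπ1 : ∀ h, ∑ a, π h a = 1) (hm0 : ∀ s a x, 0 ≤ m s a x) (hm1 : ∀ s a, ∑ x, m s a x = 1)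
    [DecidableEq S] (f : S → A → ℝ) :
    HasSum (fun h => discountedHistProb γ ρ π m h * ∑ a, π h a * f h.2 a)
      ((1 - γ)⁻¹ * ∑ s, ∑ a, occupancy γ ρ π m s a * f s a) := by
  have hπle (h : Hist S A Rw) (a : A) : π h a ≤ 1 :=
    hπ1 h ▸ single_le_sum (fun a _ => hπ0 h a) (mem_univ a)
  have hsum (s : S) (a : A) : Summable fun h : Hist S A Rw =>
      if h.2 = s then discountedHistProb γ ρ π m h * π h a else 0 := by
    have hD := discountedHistProb_nonneg hγ0 hρ0 hπ0 hm0
    refine .of_nonneg_of_le (fun h => ?_) (fun h => ?_)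
      (summable_discountedHistProb hγ0 hγ1 hρ0 hρ1 hπ0 hπ1 hm0 hm1)
    · split_ifs
      exacts [mul_nonneg (hD h) (hπ0 h a), le_rfl]
    · split_ifs
      exacts [mul_le_of_le_one_right (hD h) (hπle h a), hD h]
  have collapse : (fun h => discountedHistProb γ ρ π m h * ∑ a, π h a * f h.2 a) =
      fun h => ∑ s, ∑ a, (if h.2 = s then discountedHistProb γ ρ π m h * π h a else 0) * f s a :=
    funext fun h => by
      simp only [ite_mul, zero_mul, sum_ite_irrel, sum_const_zero, sum_ite_eq, mem_univ, if_true,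
        mul_sum, mul_assoc]
  simp only [collapse, occupancy_eq_tsum, mul_assoc, ← mul_sum]
  rw [inv_mul_cancel_left₀ (sub_ne_zero.mpr hγ1.ne')]
  exact hasSum_sum fun s _ => hasSum_sum fun a _ => (hsum s a).hasSum.mul_right (f s a)

end Discounting

theorem discounted_error_unrolling_general {S A Rw : Type*}
    [Fintype S] [Fintype A] [Fintype Rw] [DecidableEq S]
    (γ : ℝ) (hγ0 : 0 ≤ γ) (hγ1 : γ < 1)
    (ρ : S → ℝ) (hρ0 : ∀ s, 0 ≤ ρ s) (hρ1 : ∑ s, ρ s = 1)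
    (π : Hist S A Rw → A → ℝ)
    (hπ0 : ∀ h a, 0 ≤ π h a) (hπ1 : ∀ h, ∑ a, π h a = 1)
    (mhat : S → A → Rw × S → ℝ)
    (hmhat0 : ∀ s a x, 0 ≤ mhat s a x) (hmhat1 : ∀ s a, ∑ x, mhat s a x = 1)
    (Δ : Hist S A Rw → ℝ) (B : ℝ) (hΔB : ∀ h, |Δ h| ≤ B)
    (εf : S → A → ℝ)
    (hrec : ∀ h : Hist S A Rw,
      Δ h ≤ (∑ a, π h a * εf h.2 a) +
        γ * ∑ a, π h a * ∑ x : Rw × S,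
          mhat h.2 a x * Δ ((h.2, a, x.1) :: h.1, x.2)) :
    (∑ s, ρ s * Δ ([], s)) ≤
      (1 / (1 - γ)) * ∑ s, ∑ a, occupancy γ ρ π mhat s a * εf s a := by
  have hE := hasSum_pow_mul_histExpect <|
    hasSum_discountedHistProb_mul_occupancy hγ0 hγ1 hρ0 hρ1 hπ0 hπ1 hmhat0 hmhat1 εf
  rw [← histExpect_zero, one_div, ← hE.tsum_eq]
  refine le_tsum_of_le_add_mul_succ (B := B) hγ0 hγ1 (fun n => ?_) hE.summable
    (histExpect_le_add_mul_succ hρ0 hπ0 hmhat0 hrec)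
  calc histExpect ρ π mhat n Δ ≤ histExpect ρ π mhat n fun _ => B :=
        histExpect_mono hρ0 hπ0 hmhat0 n fun h => (le_abs_self _).trans (hΔB h)
    _ = B := histExpect_const hρ1 hπ1 hmhat1 n B

/-- Unrolling a discounted error recursion over the occupancy measure: if a bounded
function `Δ` on histories satisfies
`Δ(h) ≤ E_{a∼π(h)}[ε(s_h,a)] + γ·E_{a∼π(h), (r,s')∼m̂(s_h,a)}[Δ(h ⧺ (a,r,s'))]`
with `ε ≥ 0`, then `E_{s₀∼ρ}[Δ(s₀)] ≤ (1/(1−γ))·E_{(s,a)∼d^π_{m̂}}[ε(s,a)]`. -/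
theorem discounted_error_unrolling {S A Rw : Type*}
    [Fintype S] [Fintype A] [Fintype Rw] [DecidableEq S]
    (γ : ℝ) (hγ0 : 0 ≤ γ) (hγ1 : γ < 1)
    (ρ : S → ℝ) (hρ0 : ∀ s, 0 ≤ ρ s) (hρ1 : ∑ s, ρ s = 1)
    (π : Hist S A Rw → A → ℝ)
    (hπ0 : ∀ h a, 0 ≤ π h a) (hπ1 : ∀ h, ∑ a, π h a = 1)
    (mhat : S → A → Rw × S → ℝ)
    (hmhat0 : ∀ s a x, 0 ≤ mhat s a x) (hmhat1 : ∀ s a, ∑ x, mhat s a x = 1)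
    (Δ : Hist S A Rw → ℝ) (B : ℝ) (hΔB : ∀ h, |Δ h| ≤ B)
    (εf : S → A → ℝ) (hεf : ∀ s a, 0 ≤ εf s a)
    (hrec : ∀ h : Hist S A Rw,
      Δ h ≤ (∑ a, π h a * εf h.2 a) +
        γ * ∑ a, π h a * ∑ x : Rw × S,
          mhat h.2 a x * Δ ((h.2, a, x.1) :: h.1, x.2)) :
    (∑ s, ρ s * Δ ([], s)) ≤
      (1 / (1 - γ)) * ∑ s, ∑ a, occupancy γ ρ π mhat s a * εf s a :=
  discounted_error_unrolling_general γ hγ0 hγ1 ρ hρ0 hρ1 π hπ0 hπ1 mhat hmhat0 hmhat1 Δ B hΔB εf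
    hrec
end

section
/- MLE-PAC to Bayesian regret bound: suppose every model m in the support of a posterior Pr satisfies E_{(s,a)∼β}[TV(m(s,a), m*(s,a))²] ≤ L, and suppose for a fixed policy π the Bayesian concentrability C = (E_{m∼Pr} E_{(s,a)∼d^π_m}[TV(m(s,a),m*(s,a))²]) / (E_{m∼Pr} E_{(s,a)∼β}[TV(m(s,a),m*(s,a))²]) is finite with the denominator positive. Then, using the simulation lemma |J(π,m*) − J(π,m)| ≤ (2r_max/(1−γ)²)·E_{d^π_m}[TV(m,m*)], it follows that |J(π,m*) − E_{m∼Pr}[J(π,m)]| ≤ (2r_max/(1−γ)²)·sqrt(C·L). -/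
lemma jensen_sqrt_aux {ι : Type*} [Fintype ι] (w f : ι → ℝ)
    (hw : ∀ i, 0 ≤ w i) (hf : ∀ i, 0 ≤ f i) (hw1 : ∑ i, w i = 1) :
    ∑ i, w i * f i ≤ Real.sqrt (∑ i, w i * f i ^ 2) := by
  have h := Finset.sum_mul_sq_le_sq_mul_sq Finset.univ
    (fun i => Real.sqrt (w i)) (fun i => Real.sqrt (w i) * f i)
  have h1 : ∀ i : ι, Real.sqrt (w i) * (Real.sqrt (w i) * f i) = w i * f i := by
    intro i; rw [← mul_assoc, Real.mul_self_sqrt (hw i)]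
  have h2 : ∀ i : ι, Real.sqrt (w i) ^ 2 = w i := fun i => Real.sq_sqrt (hw i)
  have h3 : ∀ i : ι, (Real.sqrt (w i) * f i) ^ 2 = w i * f i ^ 2 := by
    intro i; rw [mul_pow, h2]
  simp only [h1, h2, h3, hw1, one_mul] at h
  have hnn : 0 ≤ ∑ i, w i * f i :=
    Finset.sum_nonneg fun i _ => mul_nonneg (hw i) (hf i)
  rw [Real.le_sqrt hnn]
  exact h
  · exact Finset.sum_nonneg fun i _ => mul_nonneg (hw i) (by positivity)

/-- MLE-PAC to Bayesian regret bound: if every model in the support of the posterior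
`Pr` has offline squared-TV error at most `L` under the data distribution `β`, the
Bayesian concentrability ratio `C` is finite with positive denominator, and the
simulation lemma bound `|J(π,m*) − J(π,m)| ≤ (2r_max/(1−γ)²)·E_{d^π_m}[tv m]` holds
on the support, then
`|J(π,m*) − E_{m∼Pr}[J(π,m)]| ≤ (2r_max/(1−γ)²)·√(C·L)`. -/
theorem bayesian_regret_bound {M SA : Type*} [Fintype M] [Fintype SA]
    (Pr : M → ℝ) (hPr0 : ∀ m, 0 ≤ Pr m) (hPr1 : ∑ m, Pr m = 1)
    (β : SA → ℝ) (hβ0 : ∀ x, 0 ≤ β x) (hβ1 : ∑ x, β x = 1)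
    (d : M → SA → ℝ) (hd0 : ∀ m x, 0 ≤ d m x) (hd1 : ∀ m, ∑ x, d m x = 1)
    (tv : M → SA → ℝ) (htv : ∀ m x, 0 ≤ tv m x)
    (γ rmax L : ℝ) (hγ0 : 0 ≤ γ) (hγ1 : γ < 1) (hr : 0 < rmax) (hL : 0 ≤ L)
    (J : M → ℝ) (Jstar : ℝ)
    (hMLE : ∀ m, Pr m ≠ 0 → ∑ x, β x * tv m x ^ 2 ≤ L)
    (hD : 0 < ∑ m, Pr m * ∑ x, β x * tv m x ^ 2)
    (hsim : ∀ m, Pr m ≠ 0 →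
      |Jstar - J m| ≤ (2 * rmax / (1 - γ) ^ 2) * ∑ x, d m x * tv m x) :
    |Jstar - ∑ m, Pr m * J m| ≤
      (2 * rmax / (1 - γ) ^ 2) *
        Real.sqrt (((∑ m, Pr m * ∑ x, d m x * tv m x ^ 2) /
          (∑ m, Pr m * ∑ x, β x * tv m x ^ 2)) * L) := by
  set c := 2 * rmax / (1 - γ) ^ 2 with hc_def
  have hγ : (0:ℝ) < (1 - γ) ^ 2 := pow_pos (by linarith) 2
  have hc : 0 ≤ c := by positivity
  set N := ∑ m, Pr m * ∑ x, d m x * tv m x ^ 2 with hN_def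
  set D := ∑ m, Pr m * ∑ x, β x * tv m x ^ 2 with hD_def
  have hN0 : 0 ≤ N :=
    Finset.sum_nonneg fun m _ => mul_nonneg (hPr0 m)
      (Finset.sum_nonneg fun x _ => mul_nonneg (hd0 m x) (by positivity))
  -- Step 1: triangle inequality
  have step1 : |Jstar - ∑ m, Pr m * J m| ≤ ∑ m, Pr m * |Jstar - J m| := by
    have : Jstar - ∑ m, Pr m * J m = ∑ m, Pr m * (Jstar - J m) := by
      simp [mul_sub, Finset.sum_sub_distrib, ← Finset.sum_mul, hPr1]
    rw [this]
    calc |∑ m, Pr m * (Jstar - J m)| ≤ ∑ m, |Pr m * (Jstar - J m)| :=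
          Finset.abs_sum_le_sum_abs _ _
      _ = ∑ m, Pr m * |Jstar - J m| := by
          refine Finset.sum_congr rfl fun m _ => ?_
          rw [abs_mul, abs_of_nonneg (hPr0 m)]
  -- Step 2: simulation lemma then Jensen per model
  have step2 : ∑ m, Pr m * |Jstar - J m| ≤
      c * ∑ m, Pr m * Real.sqrt (∑ x, d m x * tv m x ^ 2) := by
    rw [Finset.mul_sum]
    refine Finset.sum_le_sum fun m _ => ?_
    rcases eq_or_ne (Pr m) 0 with h | h
    · simp [h]
    · have h1 : |Jstar - J m| ≤ c * ∑ x, d m x * tv m x := hsim m h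
      have h2 : ∑ x, d m x * tv m x ≤ Real.sqrt (∑ x, d m x * tv m x ^ 2) :=
        jensen_sqrt_aux (d m) (tv m) (hd0 m) (htv m) (hd1 m)
      calc Pr m * |Jstar - J m| ≤ Pr m * (c * ∑ x, d m x * tv m x) :=
            mul_le_mul_of_nonneg_left h1 (hPr0 m)
        _ ≤ Pr m * (c * Real.sqrt (∑ x, d m x * tv m x ^ 2)) :=
            mul_le_mul_of_nonneg_left (mul_le_mul_of_nonneg_left h2 hc) (hPr0 m)
        _ = c * (Pr m * Real.sqrt (∑ x, d m x * tv m x ^ 2)) := by ring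
  -- Step 3: Jensen over models
  have step3 : ∑ m, Pr m * Real.sqrt (∑ x, d m x * tv m x ^ 2) ≤ Real.sqrt N := by
    have := jensen_sqrt_aux Pr (fun m => Real.sqrt (∑ x, d m x * tv m x ^ 2))
      hPr0 (fun m => Real.sqrt_nonneg _) hPr1
    convert this using 2
    refine Finset.sum_congr rfl fun m _ => ?_
    rw [Real.sq_sqrt (Finset.sum_nonneg fun x _ => mul_nonneg (hd0 m x) (by positivity))]
  -- Step 4: N ≤ (N/D) * L since D ≤ L
  have hDL : D ≤ L := by
    calc D ≤ ∑ m, Pr m * L := by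
          refine Finset.sum_le_sum fun m _ => ?_
          rcases eq_or_ne (Pr m) 0 with h | h
          · simp [h]
          · exact mul_le_mul_of_nonneg_left (hMLE m h) (hPr0 m)
      _ = L := by rw [← Finset.sum_mul, hPr1, one_mul]
  have step4 : Real.sqrt N ≤ Real.sqrt (N / D * L) := by
    apply Real.sqrt_le_sqrt
    calc N = N / D * D := by field_simp
      _ ≤ N / D * L := mul_le_mul_of_nonneg_left hDL (div_nonneg hN0 hD.le)
  calc |Jstar - ∑ m, Pr m * J m| ≤ ∑ m, Pr m * |Jstar - J m| := step1
    _ ≤ c * ∑ m, Pr m * Real.sqrt (∑ x, d m x * tv m x ^ 2) := step2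
    _ ≤ c * Real.sqrt N := mul_le_mul_of_nonneg_left step3 hc
    _ ≤ c * Real.sqrt (N / D * L) := mul_le_mul_of_nonneg_left step4 hc
end
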